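/- Let η, θ ∈ ℝ with 0 < η and η > A₊², where A₊ = (1+η)cos(2θ)/2, A₋ = (1−η)cos(2θ)/2, B = √(η − A₊²), φ = arccos(A₊/√η). Let v₀ = (sin θ, cos θ) ∈ ℝ² and for t ∈ ℕ let r_z(t) be the second component of G_b(η,θ)^t · v₀. Then the success probability P_b(t) := (1 − r_z(t))/2 satisfies P_b(t) = 1/2 + ((√η)^t / (2B)) · [sin(φt) sin(2θ) sin θ − (B cos(φt) − A₋ sin(φt)) cos θ]. -/
import Mathlib


open Matrix Real

/-- The noisy Grover iteration with bit-flip noise of parameter `η`. -/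
noncomputable def Gb (η θ : ℝ) : Matrix (Fin 2) (Fin 2) ℝ :=
  !![Real.cos (2 * θ), η * Real.sin (2 * θ); -Real.sin (2 * θ), η * Real.cos (2 * θ)]

theorem Gb_success_probability (η θ : ℝ) (hη : 0 < η)
    (Ap Am B φ : ℝ)
    (hAp : Ap = (1 + η) * Real.cos (2 * θ) / 2)
    (hAm : Am = (1 - η) * Real.cos (2 * θ) / 2)
    (hB : B = Real.sqrt (η - Ap ^ 2))
    (hφ : φ = Real.arccos (Ap / Real.sqrt η))
    (h : Ap ^ 2 < η) (t : ℕ) :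
    (1 - ((Gb η θ) ^ t).mulVec ![Real.sin θ, Real.cos θ] 1) / 2 =
      1 / 2 + ((Real.sqrt η) ^ t / (2 * B)) *
        (Real.sin (φ * t) * Real.sin (2 * θ) * Real.sin θ -
          (B * Real.cos (φ * t) - Am * Real.sin (φ * t)) * Real.cos θ) := by
  set s := Real.sqrt η with hs
  have hspos : 0 < s := Real.sqrt_pos.mpr hη
  have hs2 : s ^ 2 = η := Real.sq_sqrt hη.le
  have hBpos : 0 < B := by
    rw [hB]; exact Real.sqrt_pos.mpr (by linarith)
  have hB2 : B ^ 2 = η - Ap ^ 2 := by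
    rw [hB]; exact Real.sq_sqrt (by linarith)
  have habs : |Ap / s| ≤ 1 := by
    rw [abs_div, abs_of_pos hspos, div_le_one hspos]
    have h2 : Ap ^ 2 ≤ s ^ 2 := by rw [hs2]; linarith
    calc |Ap| = Real.sqrt (Ap ^ 2) := (Real.sqrt_sq_eq_abs Ap).symm
      _ ≤ Real.sqrt (s ^ 2) := Real.sqrt_le_sqrt h2
      _ = s := by rw [Real.sqrt_sq hspos.le]
  have hcos : Real.cos φ = Ap / s := by
    rw [hφ]
    exact Real.cos_arccos (abs_le.mp habs).1 (abs_le.mp habs).2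
  have hsin : Real.sin φ = B / s := by
    have h1 : 1 - (Ap / s) ^ 2 = (η - Ap ^ 2) / η := by
      rw [div_pow, hs2]; field_simp
    rw [hφ, Real.sin_arccos, h1, Real.sqrt_div (by linarith : (0:ℝ) ≤ η - Ap ^ 2), hB, hs]
  have pyth : Real.sin (2 * θ) ^ 2 + Real.cos (2 * θ) ^ 2 = 1 := Real.sin_sq_add_cos_sq _
  subst hAp hAm
  set Ap := (1 + η) * Real.cos (2 * θ) / 2 with hAp'
  set Am := (1 - η) * Real.cos (2 * θ) / 2 with hAm'
  have key : ∀ n : ℕ,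
      B * (((Gb η θ) ^ n).mulVec ![Real.sin θ, Real.cos θ] 0)
        = s ^ n * (Real.sin (φ * n) * (Am * Real.sin θ + η * Real.sin (2 * θ) * Real.cos θ)
            + B * Real.cos (φ * n) * Real.sin θ)
      ∧ B * (((Gb η θ) ^ n).mulVec ![Real.sin θ, Real.cos θ] 1)
        = s ^ n * (Real.sin (φ * n) * (-(Real.sin (2 * θ)) * Real.sin θ - Am * Real.cos θ)
            + B * Real.cos (φ * n) * Real.cos θ) := by
    intro n
    induction n with
    | zero =>
      simp only [pow_zero, Matrix.one_mulVec, Nat.cast_zero, mul_zero, Real.sin_zero,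
        Real.cos_zero]
      constructor
      · simp
      · simp
    | succ n ih =>
      obtain ⟨ih0, ih1⟩ := ih
      have hmv : ((Gb η θ) ^ (n + 1)).mulVec ![Real.sin θ, Real.cos θ]
          = (Gb η θ).mulVec (((Gb η θ) ^ n).mulVec ![Real.sin θ, Real.cos θ]) := by
        rw [pow_succ', Matrix.mulVec_mulVec]
      have hc0 : (Gb η θ).mulVec (((Gb η θ) ^ n).mulVec ![Real.sin θ, Real.cos θ]) 0
          = Real.cos (2 * θ) * (((Gb η θ) ^ n).mulVec ![Real.sin θ, Real.cos θ] 0)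
            + η * Real.sin (2 * θ) * (((Gb η θ) ^ n).mulVec ![Real.sin θ, Real.cos θ] 1) := by
        simp [Gb, Matrix.mulVec, dotProduct, Fin.sum_univ_two]
      have hc1 : (Gb η θ).mulVec (((Gb η θ) ^ n).mulVec ![Real.sin θ, Real.cos θ]) 1
          = -Real.sin (2 * θ) * (((Gb η θ) ^ n).mulVec ![Real.sin θ, Real.cos θ] 0)
            + η * Real.cos (2 * θ) * (((Gb η θ) ^ n).mulVec ![Real.sin θ, Real.cos θ] 1) := by
        simp [Gb, Matrix.mulVec, dotProduct, Fin.sum_univ_two]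
      have hsadd : s * Real.sin (φ * ((n : ℝ) + 1))
          = Real.sin (φ * n) * Ap + Real.cos (φ * n) * B := by
        rw [mul_add, mul_one, Real.sin_add, hcos, hsin]
        field_simp
      have hcadd : s * Real.cos (φ * ((n : ℝ) + 1))
          = Real.cos (φ * n) * Ap - Real.sin (φ * n) * B := by
        rw [mul_add, mul_one, Real.cos_add, hcos, hsin]
        field_simp
      rw [hAp'] at hsadd hcadd
      constructor
      · rw [hmv, hc0]
        push_cast
        linear_combination Real.cos (2 * θ) * ih0 + η * Real.sin (2 * θ) * ih1
          + s ^ n * (-η) * Real.sin (φ * n) * Real.sin θ * pyth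
          + s ^ n * Real.sin (φ * n) * Real.sin θ * hB2
          - s ^ n * (Am * Real.sin θ + η * Real.sin (2 * θ) * Real.cos θ) * hsadd
          - s ^ n * B * Real.sin θ * hcadd
      · rw [hmv, hc1]
        push_cast
        linear_combination (-(Real.sin (2 * θ))) * ih0 + η * Real.cos (2 * θ) * ih1
          + s ^ n * (-η) * Real.sin (φ * n) * Real.cos θ * pyth
          + s ^ n * Real.sin (φ * n) * Real.cos θ * hB2
          + s ^ n * (Real.sin (2 * θ) * Real.sin θ + Am * Real.cos θ) * hsadd
          - s ^ n * B * Real.cos θ * hcadd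
  have hz := (key t).2
  have hzz : ((Gb η θ) ^ t).mulVec ![Real.sin θ, Real.cos θ] 1
      = s ^ t * (Real.sin (φ * t) * (-(Real.sin (2 * θ)) * Real.sin θ - Am * Real.cos θ)
          + B * Real.cos (φ * t) * Real.cos θ) / B := by
    rw [eq_div_iff hBpos.ne', mul_comm]
    exact hz
  rw [hzz]
  field_simp
  ring
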